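/- arXiv:2503.02604 — 3 statements merged into one kernel-verified Lean document; each statement's English description precedes it below -/
import Mathlib

section
/- Let θ₀ > 0 and let φ : ℝ → ℝ be a differentiable function with φ(0) = 0 and φ'(t) = exp(−φ(t)²/(2θ₀²)) for all t ∈ ℝ (so φ is smooth and strictly increasing). Let u : ℝⁿ → ℝ be a smooth solution of Δu = u³ − u and let w : ℝⁿ → ℝ be a smooth function with u = φ ∘ w. Then Δw(x) = (u(x)/φ'(w(x)))·(u(x)² − 1 + |∇u(x)|²/θ₀²) for every x ∈ ℝⁿ. In particular, at every point x where |∇u(x)| ≥ θ₀, one has w(x)·Δw(x) ≥ 0, i.e. Δw has the same sign as w there. -/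
open MeasureTheory Filter
open scoped ENNReal

noncomputable section

/-- Second partial derivative `∂²u/∂xᵢ∂xⱼ` at `x`. -/
def pderiv2 {n : ℕ} (u : EuclideanSpace ℝ (Fin n) → ℝ) (x : EuclideanSpace ℝ (Fin n))
    (i j : Fin n) : ℝ :=
  fderiv ℝ (fun y => fderiv ℝ u y (EuclideanSpace.single j 1)) x (EuclideanSpace.single i 1)

/-- The Laplacian `Δu(x)`. -/
def lap {n : ℕ} (u : EuclideanSpace ℝ (Fin n) → ℝ) (x : EuclideanSpace ℝ (Fin n)) : ℝ :=
  ∑ i, pderiv2 u x i i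

/-- Frobenius (Hilbert–Schmidt) norm `‖D²u(x)‖` of the Hessian of `u` at `x`. -/
def hessNorm {n : ℕ} (u : EuclideanSpace ℝ (Fin n) → ℝ) (x : EuclideanSpace ℝ (Fin n)) : ℝ :=
  Real.sqrt (∑ i, ∑ j, (pderiv2 u x i j) ^ 2)

/-- The quantity `Q(u;x) = (‖D²u‖² − |∇|∇u||²)/|∇u|²`. -/
def Qfun {n : ℕ} (u : EuclideanSpace ℝ (Fin n) → ℝ) (x : EuclideanSpace ℝ (Fin n)) : ℝ :=
  ((hessNorm u x) ^ 2 - ‖gradient (fun y => ‖gradient u y‖) x‖ ^ 2) / ‖gradient u x‖ ^ 2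

/-- `F` is an admissible set with C¹ defining function `v`: `F = {v < 0}` and `∇v ≠ 0`
on `{v = 0}`, so `∂F = {v = 0}` is a C¹ hypersurface. -/
def IsAdmissiblePair {n : ℕ} (F : Set (EuclideanSpace ℝ (Fin n)))
    (v : EuclideanSpace ℝ (Fin n) → ℝ) : Prop :=
  ContDiff ℝ 1 v ∧ F = {x | v x < 0} ∧ ∀ x, v x = 0 → gradient v x ≠ 0

/-- An admissible set. -/
def IsAdmissible {n : ℕ} (F : Set (EuclideanSpace ℝ (Fin n))) : Prop :=
  ∃ v, IsAdmissiblePair F v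

/-- Weighted perimeter `𝒫_g(F,B) = ∫_{∂F ∩ B} g dH^{n−1}`. -/
def wper {n : ℕ} (g : EuclideanSpace ℝ (Fin n) → ℝ) (F B : Set (EuclideanSpace ℝ (Fin n))) :
    ℝ≥0∞ :=
  ∫⁻ x in frontier F ∩ B, ENNReal.ofReal (g x) ∂(μH[(n : ℝ) - 1])

/-- Anisotropic perimeter `𝒫_G(F,B) = ∫_{∂F ∩ B} G(x, ν_F(x)) dH^{n−1}`, where the unit
normal `ν_F = ∇v/|∇v|` is computed from the defining function `v` of `F`. -/
def aper {n : ℕ} (G : EuclideanSpace ℝ (Fin n) → EuclideanSpace ℝ (Fin n) → ℝ)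
    (v : EuclideanSpace ℝ (Fin n) → ℝ)
    (F B : Set (EuclideanSpace ℝ (Fin n))) : ℝ≥0∞ :=
  ∫⁻ x in frontier F ∩ B, ENNReal.ofReal (G x (‖gradient v x‖⁻¹ • gradient v x))
    ∂(μH[(n : ℝ) - 1])

/-- `A` is compactly contained in `B`. -/
def CompactlyContained {n : ℕ} (A B : Set (EuclideanSpace ℝ (Fin n))) : Prop :=
  IsCompact (closure A) ∧ closure A ⊆ B

/-- The point `(x', t) ∈ ℝⁿ⁺¹` obtained from `x' ∈ ℝⁿ` by appending last coordinate `t`. -/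
def appendCoord {n : ℕ} (x' : EuclideanSpace ℝ (Fin n)) (t : ℝ) :
    EuclideanSpace ℝ (Fin (n + 1)) :=
  WithLp.toLp 2 (fun i => (Fin.snoc (fun j => x' j) t : Fin (n + 1) → ℝ) i)

/-- The point `x' ∈ ℝⁿ` of first `n` coordinates of `x ∈ ℝⁿ⁺¹`. -/
def restrictCoord {n : ℕ} (x : EuclideanSpace ℝ (Fin (n + 1))) : EuclideanSpace ℝ (Fin n) :=
  WithLp.toLp 2 (fun i : Fin n => x i.castSucc)

/-- `S` is a C² graph: there are a unit vector `e` and `ψ : e^⊥ → ℝ` of class C² with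
`S = {y + ψ(y)e : y ∈ e^⊥}`. -/
def IsGraph {n : ℕ} (S : Set (EuclideanSpace ℝ (Fin n))) : Prop :=
  ∃ e : EuclideanSpace ℝ (Fin n), ‖e‖ = 1 ∧
    ∃ ψ : (Submodule.span ℝ {e})ᗮ → ℝ, ContDiff ℝ 2 ψ ∧
      S = {x | ∃ y : (Submodule.span ℝ {e})ᗮ,
        x = (y : EuclideanSpace ℝ (Fin n)) + ψ y • e}

/-- Conditions (a)–(d) on the elliptic integrand `G`, with C³-closeness constant `Λ`:
(a) positive 1-homogeneity in `p`; (b) `G(x,p) ≥ μ₀|p|` for some `μ₀ > 0`;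
(c) ellipticity of `D²_p G`; (d) derivatives up to order 3 of `G − |p|` on `|p| = 1`
bounded by `Λ`; together with continuity and C² regularity away from `p = 0`. -/
def EllipticIntegrand {n : ℕ}
    (G : EuclideanSpace ℝ (Fin n) → EuclideanSpace ℝ (Fin n) → ℝ) (Λ : ℝ) : Prop :=
  Continuous (fun q : EuclideanSpace ℝ (Fin n) × EuclideanSpace ℝ (Fin n) => G q.1 q.2) ∧
  ContDiffOn ℝ 2 (fun q : EuclideanSpace ℝ (Fin n) × EuclideanSpace ℝ (Fin n) => G q.1 q.2)
    {q | q.2 ≠ 0} ∧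
  (∀ a : ℝ, 0 < a → ∀ x p, G x (a • p) = a * G x p) ∧
  (∃ μ₀ > (0 : ℝ), ∀ x p, μ₀ * ‖p‖ ≤ G x p) ∧
  (∀ x p, p ≠ 0 → ∀ ξ : EuclideanSpace ℝ (Fin n),
    ‖p‖⁻¹ * ‖ξ - ((inner ℝ ξ (‖p‖⁻¹ • p) : ℝ)) • (‖p‖⁻¹ • p)‖ ^ 2 ≤
      fderiv ℝ (fun q => fderiv ℝ (G x) q ξ) p ξ) ∧
  (∀ x p, ‖p‖ = 1 → ∀ k : ℕ, k ≤ 3 →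
    ‖iteratedFDeriv ℝ k
      (fun q : EuclideanSpace ℝ (Fin n) × EuclideanSpace ℝ (Fin n) => G q.1 q.2 - ‖q.2‖)
      (x, p)‖ < Λ)

/-- equation satisfied by `w` where `u = φ(w)` with
`φ' = exp(−φ²/(2θ₀²))`, and the sign property (equation (3.12)). -/
theorem statement_13 {n : ℕ} (θ₀ : ℝ) (hθ₀ : 0 < θ₀)
    (φ : ℝ → ℝ) (hφdiff : Differentiable ℝ φ) (hφ0 : φ 0 = 0)
    (hφ' : ∀ t, deriv φ t = Real.exp (-(φ t) ^ 2 / (2 * θ₀ ^ 2)))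
    (u : EuclideanSpace ℝ (Fin n) → ℝ) (hu : ContDiff ℝ (⊤ : ℕ∞) u)
    (heq : ∀ x, lap u x = (u x) ^ 3 - u x)
    (w : EuclideanSpace ℝ (Fin n) → ℝ) (hw : ContDiff ℝ (⊤ : ℕ∞) w)
    (hcomp : u = φ ∘ w) :
    (∀ x, lap w x =
        (u x / deriv φ (w x)) * ((u x) ^ 2 - 1 + ‖gradient u x‖ ^ 2 / θ₀ ^ 2)) ∧
    ∀ x, θ₀ ≤ ‖gradient u x‖ → 0 ≤ w x * lap w x := by
  have hθ2 : (θ₀ : ℝ) ^ 2 ≠ 0 := by positivity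
  set g : ℝ → ℝ := deriv φ with hg
  have hgval : ∀ t, g t = Real.exp (-(φ t) ^ 2 / (2 * θ₀ ^ 2)) := hφ'
  have hgpos : ∀ t, 0 < g t := fun t => by rw [hgval t]; exact Real.exp_pos _
  -- derivative of g
  have hgd : ∀ t, HasDerivAt g (-(φ t) * g t ^ 2 / θ₀ ^ 2) t := by
    intro t
    have h1 : HasDerivAt (fun s => -(φ s) ^ 2 / (2 * θ₀ ^ 2))
        (-(2 * φ t ^ 1 * g t) / (2 * θ₀ ^ 2)) t :=
      (((hφdiff t).hasDerivAt.pow 2).neg).div_const _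
    have h2 := h1.exp
    have hfe : (fun s => Real.exp (-(φ s) ^ 2 / (2 * θ₀ ^ 2))) = g := by
      funext s; rw [hgval s]
    rw [hfe] at h2
    convert h2 using 1
    rw [hgval t]
    rw [← hgval t]
    field_simp
  have hwd : ∀ y, HasFDerivAt w (fderiv ℝ w y) y :=
    fun y => (hw.differentiable (by simp) y).hasFDerivAt
  -- first derivative of u
  have hu1 : ∀ y, HasFDerivAt u (g (w y) • fderiv ℝ w y) y := by
    intro y
    rw [hcomp]
    exact (hφdiff (w y)).hasDerivAt.comp_hasFDerivAt y (hwd y)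
  have hfu : ∀ y, fderiv ℝ u y = g (w y) • fderiv ℝ w y := fun y => (hu1 y).fderiv
  -- gradient relation
  have hgrad : ∀ y, gradient u y = g (w y) • gradient w y := by
    intro y
    unfold gradient
    rw [hfu y, _root_.map_smul]
  have hnu : ∀ y, ‖gradient u y‖ ^ 2 = g (w y) ^ 2 * ‖gradient w y‖ ^ 2 := by
    intro y
    rw [hgrad y, norm_smul, mul_pow, Real.norm_eq_abs, sq_abs]
  -- fderiv w x v = (gradient w x) applied
  have hfw_grad : ∀ (y) (v : EuclideanSpace ℝ (Fin n)),
      fderiv ℝ w y v = (inner ℝ (gradient w y) v : ℝ) := by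
    intro y v
    rw [gradient, InnerProductSpace.toDual_symm_apply]
  -- sum of squares of directional derivatives
  have hsum : ∀ y, ∑ i, (fderiv ℝ w y (EuclideanSpace.single i 1)) ^ 2
      = ‖gradient w y‖ ^ 2 := by
    intro y
    have hn : ‖gradient w y‖ ^ 2 = ∑ i, (gradient w y i) ^ 2 := by
      rw [EuclideanSpace.norm_eq, Real.sq_sqrt (by positivity)]
      simp [sq_abs]
    rw [hn]
    refine Finset.sum_congr rfl fun i _ => ?_
    rw [hfw_grad, real_inner_comm, EuclideanSpace.inner_single_left]
    simp
  -- second derivative key identity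
  have hΦ : Differentiable ℝ (fun y => fderiv ℝ w y) :=
    (hw.fderiv_right (m := 1) (WithTop.coe_le_coe.mpr le_top)).differentiable one_ne_zero
  have key : ∀ (x : EuclideanSpace ℝ (Fin n)) (i j : Fin n),
      pderiv2 u x i j =
        (-(φ (w x)) * g (w x) ^ 2 / θ₀ ^ 2) *
          (fderiv ℝ w x (EuclideanSpace.single i 1) * fderiv ℝ w x (EuclideanSpace.single j 1))
        + g (w x) * pderiv2 w x i j := by
    intro x i j
    set ej : EuclideanSpace ℝ (Fin n) := EuclideanSpace.single j 1
    set ei : EuclideanSpace ℝ (Fin n) := EuclideanSpace.single i 1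
    have hA : HasFDerivAt (fun y => g (w y))
        ((-(φ (w x)) * g (w x) ^ 2 / θ₀ ^ 2) • fderiv ℝ w x) x :=
      (hgd (w x)).comp_hasFDerivAt x (hwd x)
    have hB : HasFDerivAt (fun y => fderiv ℝ w y ej)
        ((ContinuousLinearMap.apply ℝ ℝ ej).comp
          (fderiv ℝ (fun y => fderiv ℝ w y) x)) x :=
      (ContinuousLinearMap.apply ℝ ℝ ej).hasFDerivAt.comp x (hΦ x).hasFDerivAt
    have hAB : HasFDerivAt (fun y => g (w y) * fderiv ℝ w y ej) _ x := hA.mul hB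
    have heqfun : (fun y => fderiv ℝ u y ej) = fun y => g (w y) * fderiv ℝ w y ej := by
      funext y; rw [hfu y]; rfl
    have hpw : pderiv2 w x i j = fderiv ℝ (fun y => fderiv ℝ w y) x ei ej := by
      rw [pderiv2, hB.fderiv]; rfl
    rw [pderiv2, heqfun, hAB.fderiv, hpw]
    simp [ContinuousLinearMap.add_apply, ContinuousLinearMap.smul_apply]
    ring
  -- laplacian relation
  have hlap : ∀ x, lap u x =
      (-(φ (w x)) * g (w x) ^ 2 / θ₀ ^ 2) * ‖gradient w x‖ ^ 2 + g (w x) * lap w x := by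
    intro x
    rw [lap, lap, ← hsum x, Finset.mul_sum, Finset.mul_sum, ← Finset.sum_add_distrib]
    refine Finset.sum_congr rfl fun i _ => ?_
    rw [key x i i]; ring
  have hux : ∀ x, u x = φ (w x) := fun x => by rw [hcomp]; rfl
  have main : ∀ x, lap w x =
      (u x / g (w x)) * ((u x) ^ 2 - 1 + ‖gradient u x‖ ^ 2 / θ₀ ^ 2) := by
    intro x
    have h1 := heq x
    rw [hlap x] at h1
    have hgne : g (w x) ≠ 0 := (hgpos (w x)).ne'
    rw [hnu x]
    rw [hux x] at h1 ⊢
    field_simp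
    field_simp at h1
    nlinarith [h1]
  refine ⟨main, fun x hx => ?_⟩
  rw [main x]
  have hgne : (0:ℝ) < g (w x) := hgpos (w x)
  have h1 : (1:ℝ) ≤ ‖gradient u x‖ ^ 2 / θ₀ ^ 2 := by
    rw [le_div_iff₀ (by positivity)]
    nlinarith
  have h2 : (0:ℝ) ≤ (u x) ^ 2 - 1 + ‖gradient u x‖ ^ 2 / θ₀ ^ 2 := by nlinarith [sq_nonneg (u x)]
  have h3 : 0 ≤ w x * u x := by
    rw [hux x]
    have hmono : StrictMono φ := strictMono_of_deriv_pos hgpos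
    rcases le_or_gt 0 (w x) with h | h
    · exact mul_nonneg h (by simpa [hφ0] using (hmono.le_iff_le.mpr h : φ 0 ≤ φ (w x)))
    · have : φ (w x) ≤ 0 := by simpa [hφ0] using (hmono.le_iff_le.mpr h.le : φ (w x) ≤ φ 0)
      exact mul_nonneg_iff.mpr (Or.inr ⟨h.le, this⟩)
  calc (0:ℝ) ≤ (w x * u x / g (w x)) * ((u x) ^ 2 - 1 + ‖gradient u x‖ ^ 2 / θ₀ ^ 2) := by
        exact mul_nonneg (div_nonneg h3 hgne.le) h2
    _ = w x * (u x / g (w x) * ((u x) ^ 2 - 1 + ‖gradient u x‖ ^ 2 / θ₀ ^ 2)) := by ring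
end
end

section
/- Let u : ℝⁿ → ℝ be a smooth entire solution of Δu = u³ − u with |u(x)| < 1 and ∇u(x) ≠ 0 for every x ∈ ℝⁿ, and suppose Q(u;x) ≤ C₂(1 − u(x)²) for all x, for some constant C₂ ∈ (0,1). Set c₃ = 1 − C₂, P̃(x) = (c₃/2)(1 − u(x)²)² − |∇u(x)|², B_i(x) = P̃_{x_i}(x)/(2|∇u(x)|²) − 2c₃(u(x)³ − u(x))u_{x_i}(x)/|∇u(x)|² for i = 1, …, n, and C(u;x) = min{2(c₃ − 1)(3u(x)² − 1) − 2Q(u;x), 0}. Then the elliptic differential inequality ΔP̃(x) + ∑_{i=1}^n B_i(x) P̃_{x_i}(x) + C(u;x) P̃(x) ≥ 0 holds for every x ∈ ℝⁿ. -/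
open MeasureTheory Filter
open scoped ENNReal

noncomputable section

section AuxPF

variable {n : ℕ}
abbrev ES (n : ℕ) := EuclideanSpace ℝ (Fin n)

/-- partial derivative in direction i -/
def pd (u : ES n → ℝ) (i : Fin n) (y : ES n) : ℝ :=
  fderiv ℝ u y (EuclideanSpace.single i 1)

lemma contDiff_pd {u : ES n → ℝ} (hu : ContDiff ℝ (⊤ : ℕ∞) u) (i : Fin n) :
    ContDiff ℝ (⊤ : ℕ∞) (pd u i) :=
  (hu.fderiv_right (by simp)).clm_apply contDiff_const

lemma gradient_apply {u : ES n → ℝ} (hu : DifferentiableAt ℝ u x) (i : Fin n) :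
    gradient u x i = pd u i x := by
  have h : HasGradientAt u (gradient u x) x := hu.hasGradientAt
  rw [hasGradientAt_iff_hasFDerivAt] at h
  have := h.fderiv
  rw [pd, this]
  rw [InnerProductSpace.toDual_apply_apply, EuclideanSpace.inner_single_right]; simp

lemma norm_grad_sq {u : ES n → ℝ} (hu : DifferentiableAt ℝ u x) :
    ‖gradient u x‖ ^ 2 = ∑ i, (pd u i x) ^ 2 := by
  rw [EuclideanSpace.norm_eq, Real.sq_sqrt (by positivity)]
  exact Finset.sum_congr rfl fun i _ => by
    rw [gradient_apply hu i, Real.norm_eq_abs, sq_abs]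

lemma pd_pd_eq {u : ES n → ℝ} (hu : ContDiff ℝ (⊤ : ℕ∞) u) (i j : Fin n) (x : ES n) :
    pd (pd u j) i x =
      fderiv ℝ (fderiv ℝ u) x (EuclideanSpace.single i 1) (EuclideanSpace.single j 1) := by
  have hd : DifferentiableAt ℝ (fderiv ℝ u) x :=
    (hu.fderiv_right (m := (⊤ : ℕ∞)) (by simp)).differentiable (by simp) x
  rw [pd, show pd u j = (fun y => (fderiv ℝ u y) (EuclideanSpace.single j 1))
    from rfl, fderiv_clm_apply hd (differentiableAt_const _)]
  simp

lemma pd_symm {u : ES n → ℝ} (hu : ContDiff ℝ (⊤ : ℕ∞) u) (i j : Fin n) (x : ES n) :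
    pd (pd u j) i x = pd (pd u i) j x := by
  rw [pd_pd_eq hu, pd_pd_eq hu]
  exact second_derivative_symmetric
    (fun y => (hu.differentiable (by simp) y).hasFDerivAt)
    ((hu.fderiv_right (m := (⊤ : ℕ∞)) (by simp)).differentiable (by simp) x).hasFDerivAt _ _


section pdcalc
variable {f g : ES n → ℝ} {x : ES n} {i : Fin n}

lemma pd_const (c : ℝ) : pd (fun _ => c) i x = 0 := by
  simp [pd]

lemma pd_add (hf : DifferentiableAt ℝ f x) (hg : DifferentiableAt ℝ g x) :
    pd (fun y => f y + g y) i x = pd f i x + pd g i x := by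
  simp [pd, fderiv_fun_add hf hg]

lemma pd_sub (hf : DifferentiableAt ℝ f x) (hg : DifferentiableAt ℝ g x) :
    pd (fun y => f y - g y) i x = pd f i x - pd g i x := by
  simp [pd, fderiv_fun_sub hf hg]

lemma pd_mul (hf : DifferentiableAt ℝ f x) (hg : DifferentiableAt ℝ g x) :
    pd (fun y => f y * g y) i x = f x * pd g i x + pd f i x * g x := by
  simp [pd, fderiv_fun_mul hf hg, mul_comm]

lemma pd_const_mul (hf : DifferentiableAt ℝ f x) (c : ℝ) :
    pd (fun y => c * f y) i x = c * pd f i x := by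
  simp [pd, fderiv_const_mul hf c]

lemma pd_sum {ι : Type*} (s : Finset ι) (F : ι → ES n → ℝ)
    (hF : ∀ j ∈ s, DifferentiableAt ℝ (F j) x) :
    pd (fun y => ∑ j ∈ s, F j y) i x = ∑ j ∈ s, pd (F j) i x := by
  simp [pd, fderiv_fun_sum hF]

end pdcalc

lemma pd_sq {f : ES n → ℝ} {x : ES n} {i : Fin n} (hf : DifferentiableAt ℝ f x) :
    pd (fun y => f y ^ 2) i x = 2 * f x * pd f i x := by
  have : (fun y => f y ^ 2) = fun y => f y * f y := by funext y; ring
  rw [this, pd_mul hf hf]; ring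

section main
variable {u : ES n → ℝ}

/-- |∇u|² as a sum of squares -/
def Wfun (u : ES n → ℝ) (y : ES n) : ℝ := ∑ j, (pd u j y) ^ 2

lemma du (hu : ContDiff ℝ (⊤ : ℕ∞) u) : ∀ y, DifferentiableAt ℝ u y := fun y => (hu.differentiable (by simp)).differentiableAt

lemma dpd (hu : ContDiff ℝ (⊤ : ℕ∞) u) (j : Fin n) : ∀ y, DifferentiableAt ℝ (pd u j) y :=
  fun y => ((contDiff_pd hu j).differentiable (by simp)).differentiableAt

lemma dpd2 (hu : ContDiff ℝ (⊤ : ℕ∞) u) (i j : Fin n) : ∀ y, DifferentiableAt ℝ (pd (pd u j) i) y :=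
  fun y => ((contDiff_pd (contDiff_pd hu j) i).differentiable (by simp)).differentiableAt

lemma contDiff_W (hu : ContDiff ℝ (⊤ : ℕ∞) u) : ContDiff ℝ (⊤ : ℕ∞) (Wfun u) := by
  apply ContDiff.sum
  intro j _
  exact (contDiff_pd hu j).pow 2

lemma dW (hu : ContDiff ℝ (⊤ : ℕ∞) u) : ∀ y, DifferentiableAt ℝ (Wfun u) y :=
  fun y => ((contDiff_W hu).differentiable (by simp)).differentiableAt

lemma W_eq (hu : ContDiff ℝ (⊤ : ℕ∞) u) : ∀ y, ‖gradient u y‖ ^ 2 = Wfun u y :=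
  fun y => norm_grad_sq (du hu y)

lemma pd_W (hu : ContDiff ℝ (⊤ : ℕ∞) u) (i : Fin n) (x : ES n) :
    pd (Wfun u) i x = ∑ j, 2 * pd u j x * pd (pd u j) i x := by
  rw [show Wfun u = fun y => ∑ j, (pd u j y) ^ 2 from rfl,
    pd_sum Finset.univ _ (fun j _ => ((dpd hu j x).fun_pow 2))]
  exact Finset.sum_congr rfl fun j _ => pd_sq (dpd hu j x)

end main

lemma pd_cube {f : ES n → ℝ} {x : ES n} {i : Fin n} (hf : DifferentiableAt ℝ f x) :
    pd (fun y => f y ^ 3) i x = 3 * f x ^ 2 * pd f i x := by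
  have h : (fun y => f y ^ 3) = fun y => f y ^ 2 * f y := by funext y; ring
  rw [h, pd_mul (hf.fun_pow 2) hf, pd_sq hf]; ring

lemma pderiv2_eq (u : ES n → ℝ) (x : ES n) (i j : Fin n) :
    pderiv2 u x i j = pd (pd u j) i x := rfl

lemma third_sum {u : ES n → ℝ} (hu : ContDiff ℝ (⊤ : ℕ∞) u)
    (heq : ∀ y, lap u y = u y ^ 3 - u y) (j : Fin n) (x : ES n) :
    ∑ i, pd (pd (pd u j) i) i x = (3 * u x ^ 2 - 1) * pd u j x := by
  have h1 : ∀ i : Fin n, pd (pd (pd u j) i) i x = pd (pd (pd u i) i) j x := by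
    intro i
    have e1 : pd (pd u j) i = pd (pd u i) j := funext fun y => pd_symm hu i j y
    rw [e1]
    exact pd_symm (contDiff_pd hu i) i j x
  rw [Finset.sum_congr rfl fun i _ => h1 i,
    ← pd_sum Finset.univ (fun i => pd (pd u i) i) (fun i _ => dpd2 hu i i x)]
  have e2 : (fun y => ∑ i, pd (pd u i) i y) = fun y => u y ^ 3 - u y := by
    funext y; rw [← heq y]; rfl
  rw [e2, pd_sub ((du hu x).fun_pow 3) (du hu x), pd_cube (du hu x)]; ring

/-- the P-function -/
def Pfun (c₃ : ℝ) (u : ES n → ℝ) (y : ES n) : ℝ :=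
  c₃ / 2 * (1 - u y ^ 2) ^ 2 - Wfun u y

lemma contDiff_P {u : ES n → ℝ} (hu : ContDiff ℝ (⊤ : ℕ∞) u) (c₃ : ℝ) :
    ContDiff ℝ (⊤ : ℕ∞) (Pfun c₃ u) :=
  (contDiff_const.mul ((contDiff_const.sub (hu.pow 2)).pow 2)).sub (contDiff_W hu)

lemma dPf {u : ES n → ℝ} (hu : ContDiff ℝ (⊤ : ℕ∞) u) (c₃ : ℝ) :
    ∀ y, DifferentiableAt ℝ (Pfun c₃ u) y :=
  fun y => ((contDiff_P hu c₃).differentiable (by simp)).differentiableAt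

lemma pd_P {u : ES n → ℝ} (hu : ContDiff ℝ (⊤ : ℕ∞) u) (c₃ : ℝ) (i : Fin n) (x : ES n) :
    pd (Pfun c₃ u) i x = 2 * c₃ * (u x ^ 3 - u x) * pd u i x - pd (Wfun u) i x := by
  have hv : DifferentiableAt ℝ (fun y => 1 - u y ^ 2) x :=
    (differentiableAt_const 1).sub ((du hu x).pow 2)
  have e : Pfun c₃ u = fun y => c₃ / 2 * ((fun z => 1 - u z ^ 2) y) ^ 2 - Wfun u y := rfl
  rw [e, pd_sub (hv.fun_pow 2 |>.const_mul _) (dW hu x), pd_const_mul (hv.fun_pow 2),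
    pd_sq hv, pd_sub (differentiableAt_const 1) ((du hu x).fun_pow 2), pd_sq (du hu x), pd_const]
  ring

lemma pderiv2_P {u : ES n → ℝ} (hu : ContDiff ℝ (⊤ : ℕ∞) u) (c₃ : ℝ) (i : Fin n) (x : ES n) :
    pderiv2 (Pfun c₃ u) x i i =
      2 * c₃ * ((3 * u x ^ 2 - 1) * (pd u i x) ^ 2 + (u x ^ 3 - u x) * pd (pd u i) i x)
        - ∑ j, (2 * (pd (pd u j) i x) ^ 2 + 2 * pd u j x * pd (pd (pd u j) i) i x) := by
  rw [pderiv2_eq]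
  have e : pd (Pfun c₃ u) i =
      fun y => 2 * c₃ * (u y ^ 3 - u y) * pd u i y - pd (Wfun u) i y :=
    funext fun y => pd_P hu c₃ i y
  have h1 : DifferentiableAt ℝ (fun y => 2 * c₃ * (u y ^ 3 - u y) * pd u i y) x :=
    ((((du hu x).pow 3).sub (du hu x)).const_mul (2 * c₃)).mul (dpd hu i x)
  have h2 : DifferentiableAt ℝ (pd (Wfun u) i) x := dpd (contDiff_W hu) i x
  rw [e, pd_sub h1 h2]
  have h3 : pd (fun y => 2 * c₃ * (u y ^ 3 - u y) * pd u i y) i x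
      = 2 * c₃ * ((3 * u x ^ 2 - 1) * (pd u i x) ^ 2 + (u x ^ 3 - u x) * pd (pd u i) i x) := by
    rw [pd_mul ((((du hu x).fun_pow 3).fun_sub (du hu x)).const_mul (2 * c₃)) (dpd hu i x),
      pd_const_mul (((du hu x).fun_pow 3).fun_sub (du hu x)),
      pd_sub ((du hu x).fun_pow 3) (du hu x), pd_cube (du hu x)]
    ring
  have h4 : pd (pd (Wfun u) i) i x
      = ∑ j, (2 * (pd (pd u j) i x) ^ 2 + 2 * pd u j x * pd (pd (pd u j) i) i x) := by
    have e2 : pd (Wfun u) i = fun y => ∑ j, 2 * pd u j y * pd (pd u j) i y :=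
      funext fun y => pd_W hu i y
    rw [e2, pd_sum Finset.univ _
      (fun j _ => ((dpd hu j x).const_mul 2).fun_mul (dpd2 hu i j x))]
    refine Finset.sum_congr rfl fun j _ => ?_
    rw [pd_mul ((dpd hu j x).const_mul 2) (dpd2 hu i j x), pd_const_mul (dpd hu j x)]
    ring
  rw [h3, h4]

lemma lap_P {u : ES n → ℝ} (hu : ContDiff ℝ (⊤ : ℕ∞) u)
    (heq : ∀ y, lap u y = u y ^ 3 - u y) (c₃ : ℝ) (x : ES n) :
    lap (Pfun c₃ u) x =
      2 * c₃ * ((3 * u x ^ 2 - 1) * Wfun u x + (u x ^ 3 - u x) ^ 2)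
        - 2 * (∑ i, ∑ j, (pd (pd u j) i x) ^ 2)
        - 2 * (3 * u x ^ 2 - 1) * Wfun u x := by
  have e0 : lap (Pfun c₃ u) x = ∑ i, pderiv2 (Pfun c₃ u) x i i := rfl
  have hl : ∑ i, pd (pd u i) i x = u x ^ 3 - u x := heq x
  have key : ∀ i : Fin n, pderiv2 (Pfun c₃ u) x i i
      = (2 * c₃ * (3 * u x ^ 2 - 1)) * (pd u i x) ^ 2
        + (2 * c₃ * (u x ^ 3 - u x)) * pd (pd u i) i x
        - (∑ j, 2 * (pd (pd u j) i x) ^ 2)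
        - (∑ j, 2 * pd u j x * pd (pd (pd u j) i) i x) := by
    intro i
    rw [pderiv2_P hu c₃ i x, Finset.sum_add_distrib]
    ring
  rw [e0, Finset.sum_congr rfl fun i _ => key i]
  rw [Finset.sum_sub_distrib, Finset.sum_sub_distrib, Finset.sum_add_distrib,
    ← Finset.mul_sum, ← Finset.mul_sum, hl]
  have e2 : ∑ i : Fin n, ∑ j, 2 * (pd (pd u j) i x) ^ 2
      = 2 * ∑ i : Fin n, ∑ j, (pd (pd u j) i x) ^ 2 := by
    simp only [← Finset.mul_sum]
  have e3 : (∑ i : Fin n, ∑ j, 2 * pd u j x * pd (pd (pd u j) i) i x)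
      = 2 * (3 * u x ^ 2 - 1) * Wfun u x := by
    rw [Finset.sum_comm]
    have h : ∀ j : Fin n, ∑ i, 2 * pd u j x * pd (pd (pd u j) i) i x
        = (2 * (3 * u x ^ 2 - 1)) * (pd u j x) ^ 2 := by
      intro j
      rw [← Finset.mul_sum, third_sum hu heq j x]
      ring
    rw [Finset.sum_congr rfl fun j _ => h j, ← Finset.mul_sum]
    rw [show Wfun u x = ∑ j, (pd u j x) ^ 2 from rfl]
  rw [e2, e3]
  rw [show Wfun u x = ∑ j, (pd u j x) ^ 2 from rfl]
  ring

lemma hessNorm_sq {u : ES n → ℝ} (x : ES n) :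
    (hessNorm u x) ^ 2 = ∑ i, ∑ j, (pd (pd u j) i x) ^ 2 := by
  rw [hessNorm, Real.sq_sqrt (by positivity)]
  rfl

lemma pd_norm_grad {u : ES n → ℝ} (hu : ContDiff ℝ (⊤ : ℕ∞) u) (x : ES n)
    (hW : Wfun u x ≠ 0) :
    HasFDerivAt (fun y => ‖gradient u y‖)
      ((1 / (2 * Real.sqrt (Wfun u x))) • fderiv ℝ (Wfun u) x) x := by
  have e : (fun y => ‖gradient u y‖) = fun y => Real.sqrt (Wfun u y) := by
    funext y
    rw [← Real.sqrt_sq (norm_nonneg (gradient u y)), W_eq hu y]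
  rw [e]
  exact (Real.hasDerivAt_sqrt hW).comp_hasFDerivAt x (dW hu x).hasFDerivAt

end AuxPF

/-- the elliptic differential inequality `LP̃ ≥ 0` for the P-function
`P̃ = (c₃/2)(1 − u²)² − |∇u|²` (equations (4.19)–(4.22)). -/
theorem statement_18 {n : ℕ} (u : EuclideanSpace ℝ (Fin n) → ℝ) (hu : ContDiff ℝ (⊤ : ℕ∞) u)
    (heq : ∀ x, lap u x = (u x) ^ 3 - u x)
    (hbd : ∀ x, |u x| < 1) (hgrad : ∀ x, gradient u x ≠ 0)
    (C₂ : ℝ) (hC₂ : C₂ ∈ Set.Ioo (0 : ℝ) 1)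
    (hQ : ∀ x, Qfun u x ≤ C₂ * (1 - (u x) ^ 2))
    (c₃ : ℝ) (hc₃ : c₃ = 1 - C₂)
    (Pt : EuclideanSpace ℝ (Fin n) → ℝ)
    (hPt : Pt = fun y => (c₃ / 2) * (1 - (u y) ^ 2) ^ 2 - ‖gradient u y‖ ^ 2)
    (B : Fin n → EuclideanSpace ℝ (Fin n) → ℝ)
    (hB : ∀ i x, B i x =
      fderiv ℝ Pt x (EuclideanSpace.single i 1) / (2 * ‖gradient u x‖ ^ 2)
        - 2 * c₃ * ((u x) ^ 3 - u x) * fderiv ℝ u x (EuclideanSpace.single i 1) /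
            ‖gradient u x‖ ^ 2)
    (Cf : EuclideanSpace ℝ (Fin n) → ℝ)
    (hCf : ∀ x, Cf x = min (2 * (c₃ - 1) * (3 * (u x) ^ 2 - 1) - 2 * Qfun u x) 0) :
    ∀ x, 0 ≤ lap Pt x
        + ∑ i, B i x * fderiv ℝ Pt x (EuclideanSpace.single i 1)
        + Cf x * Pt x := by
  intro x
  have hPf : Pt = Pfun c₃ u := by
    rw [hPt]; funext y
    show c₃ / 2 * (1 - u y ^ 2) ^ 2 - ‖gradient u y‖ ^ 2 = c₃ / 2 * (1 - u y ^ 2) ^ 2 - Wfun u y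
    rw [W_eq hu y]
  have hgn : ‖gradient u x‖ ^ 2 = Wfun u x := W_eq hu x
  have hWpos : 0 < Wfun u x := by
    rw [← hgn]
    exact pow_pos (norm_pos_iff.2 (hgrad x)) 2
  have hWne : Wfun u x ≠ 0 := ne_of_gt hWpos
  -- value of B
  have hBval : ∀ i, B i x = -(c₃ * (u x ^ 3 - u x) * pd u i x) / Wfun u x
      - pd (Wfun u) i x / (2 * Wfun u x) := by
    intro i
    rw [hB i x, hPf, hgn,
      show fderiv ℝ (Pfun c₃ u) x (EuclideanSpace.single i 1) = pd (Pfun c₃ u) i x from rfl,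
      pd_P hu c₃ i x,
      show fderiv ℝ u x (EuclideanSpace.single i 1) = pd u i x from rfl]
    field_simp
    ring
  -- the first-order sum
  have hBsum : ∑ i, B i x * pd (Pfun c₃ u) i x
      = -2 * c₃ ^ 2 * (u x ^ 3 - u x) ^ 2
        + (∑ i, (pd (Wfun u) i x) ^ 2) / (2 * Wfun u x) := by
    have hterm : ∀ i : Fin n, B i x * pd (Pfun c₃ u) i x
        = (-2 * c₃ ^ 2 * (u x ^ 3 - u x) ^ 2 / Wfun u x) * (pd u i x) ^ 2
          + (1 / (2 * Wfun u x)) * (pd (Wfun u) i x) ^ 2 := by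
      intro i
      rw [hBval i, pd_P hu c₃ i x]
      field_simp
      ring
    rw [Finset.sum_congr rfl fun i _ => hterm i, Finset.sum_add_distrib,
      ← Finset.mul_sum, ← Finset.mul_sum,
      show (∑ i, (pd u i x) ^ 2) = Wfun u x from rfl]
    field_simp
  -- value of Q
  have hQval : Qfun u x = ((∑ i, ∑ j, (pd (pd u j) i x) ^ 2)
      - (∑ i, (pd (Wfun u) i x) ^ 2) / (4 * Wfun u x)) / Wfun u x := by
    rw [Qfun, hessNorm_sq, hgn]
    have hgf := pd_norm_grad hu x hWne
    have hdiff : DifferentiableAt ℝ (fun y => ‖gradient u y‖) x := hgf.differentiableAt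
    have hpds : ∀ i, pd (fun y => ‖gradient u y‖) i x
        = (1 / (2 * Real.sqrt (Wfun u x))) * pd (Wfun u) i x := by
      intro i
      rw [pd, hgf.fderiv]
      simp [pd]
    have hsq : ((1 : ℝ) / (2 * Real.sqrt (Wfun u x))) ^ 2 = 1 / (4 * Wfun u x) := by
      rw [div_pow, mul_pow, Real.sq_sqrt hWpos.le]
      norm_num
    have e : ∀ i : Fin n, (pd (fun y => ‖gradient u y‖) i x) ^ 2
        = (1 / (4 * Wfun u x)) * (pd (Wfun u) i x) ^ 2 := by
      intro i
      rw [hpds i, mul_pow, hsq]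
    rw [norm_grad_sq hdiff, Finset.sum_congr rfl fun i _ => e i, ← Finset.mul_sum]
    field_simp
  -- rewrite the goal
  rw [hPf, hCf x]
  rw [show (∑ i, B i x * fderiv ℝ (Pfun c₃ u) x (EuclideanSpace.single i 1))
      = ∑ i, B i x * pd (Pfun c₃ u) i x from rfl]
  rw [lap_P hu heq c₃ x, hBsum, hQval,
    show Pfun c₃ u x = c₃ / 2 * (1 - u x ^ 2) ^ 2 - Wfun u x from rfl]
  -- abbreviate
  set a := u x with ha
  set W := Wfun u x with hW
  set H := ∑ i, ∑ j, (pd (pd u j) i x) ^ 2 with hHdef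
  set K := ∑ i, (pd (Wfun u) i x) ^ 2 with hKdef
  set Q' := (H - K / (4 * W)) / W with hQdef
  have hQx : Q' ≤ C₂ * (1 - a ^ 2) := by
    have := hQ x
    rw [hQval] at this
    exact this
  have hH' : H = Q' * W + K / (4 * W) := by
    rw [hQdef]
    field_simp
    ring
  have hc3pos : 0 < c₃ := by rw [hc₃]; linarith [hC₂.2]
  have hc3lt : c₃ < 1 := by rw [hc₃]; linarith [hC₂.1]
  rcases le_or_gt 0 (2 * (c₃ - 1) * (3 * a ^ 2 - 1) - 2 * Q') with hA | hA
  · rw [min_eq_right hA, zero_mul, add_zero]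
    have key : 2 * c₃ * ((3 * a ^ 2 - 1) * W + (a ^ 3 - a) ^ 2) - 2 * H
        - 2 * (3 * a ^ 2 - 1) * W
        + (-2 * c₃ ^ 2 * (a ^ 3 - a) ^ 2 + K / (2 * W))
        = (2 * (c₃ - 1) * (3 * a ^ 2 - 1) - 2 * Q') * W
          + 2 * c₃ * (1 - c₃) * (a ^ 3 - a) ^ 2 := by
      rw [hH']
      field_simp
      ring
    rw [key]
    have h1 : 0 ≤ (2 * (c₃ - 1) * (3 * a ^ 2 - 1) - 2 * Q') * W :=
      mul_nonneg hA hWpos.le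
    have h2 : 0 ≤ 2 * c₃ * (1 - c₃) * (a ^ 3 - a) ^ 2 :=
      mul_nonneg (by nlinarith) (sq_nonneg _)
    linarith
  · rw [min_eq_left hA.le]
    have key : 2 * c₃ * ((3 * a ^ 2 - 1) * W + (a ^ 3 - a) ^ 2) - 2 * H
        - 2 * (3 * a ^ 2 - 1) * W
        + (-2 * c₃ ^ 2 * (a ^ 3 - a) ^ 2 + K / (2 * W))
        + (2 * (c₃ - 1) * (3 * a ^ 2 - 1) - 2 * Q') * (c₃ / 2 * (1 - a ^ 2) ^ 2 - W)
        = c₃ * (1 - a ^ 2) ^ 2 * ((1 - c₃) * (1 - a ^ 2) - Q') := by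
      rw [hH']
      field_simp
      ring
    rw [key]
    apply mul_nonneg (mul_nonneg hc3pos.le (sq_nonneg _))
    rw [show (1 : ℝ) - c₃ = C₂ from by rw [hc₃]; ring]
    linarith
end
end

section
/- Let c₀ ∈ (0,1) and let φ : ℝ → ℝ be a differentiable function with φ(0) = 0, −1 < φ(t) < 1 for all t, and φ'(t) = (1 − φ(t)²)^{1/c₀} for all t ∈ ℝ (so φ is strictly increasing). Let u : ℝⁿ → ℝ be a smooth solution of Δu = u³ − u with |u| < 1 and let w : ℝⁿ → ℝ be a smooth function with u = φ ∘ w. Then Δw(x) = (u(x)/φ'(w(x)))·(u(x)² − 1 + 2|∇u(x)|²/(c₀(1 − u(x)²))) for every x ∈ ℝⁿ. In particular, at every point x where (c₀/2)(1 − u(x)²)² ≤ |∇u(x)|², one has w(x)·Δw(x) ≥ 0, i.e. Δw has the same sign as w there. -/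
open MeasureTheory Filter
open scoped ENNReal

noncomputable section

private lemma euclid_norm_sq {n : ℕ} (g : EuclideanSpace ℝ (Fin n)) :
    ‖g‖ ^ 2 = ∑ i, (g i) ^ 2 := by
  rw [EuclideanSpace.norm_eq, Real.sq_sqrt (by positivity)]
  simp [Real.norm_eq_abs, sq_abs]

private lemma gradient_apply_coord {n : ℕ} (f : EuclideanSpace ℝ (Fin n) → ℝ)
    (x : EuclideanSpace ℝ (Fin n)) (i : Fin n) :
    (gradient f x) i = fderiv ℝ f x (EuclideanSpace.single i 1) := by
  have h1 : (gradient f x) i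
      = (inner ℝ (gradient f x) (EuclideanSpace.single i (1:ℝ)) : ℝ) := by
    rw [EuclideanSpace.inner_single_right]; simp
  rw [h1, gradient, InnerProductSpace.toDual_symm_apply]

private lemma gradient_norm_sq {n : ℕ} (f : EuclideanSpace ℝ (Fin n) → ℝ)
    (x : EuclideanSpace ℝ (Fin n)) :
    ‖gradient f x‖ ^ 2 = ∑ i, (fderiv ℝ f x (EuclideanSpace.single i 1)) ^ 2 := by
  rw [euclid_norm_sq]
  exact Finset.sum_congr rfl fun i _ => by rw [gradient_apply_coord]

/-- equation satisfied by `w` where `u = φ(w)` with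
`φ' = (1 − φ²)^{1/c₀}`, and the sign property (equation (4.16)). -/
theorem statement_19 {n : ℕ} (c₀ : ℝ) (hc₀ : c₀ ∈ Set.Ioo (0 : ℝ) 1)
    (φ : ℝ → ℝ) (hφdiff : Differentiable ℝ φ) (hφ0 : φ 0 = 0)
    (hφbd : ∀ t, φ t ∈ Set.Ioo (-1 : ℝ) 1)
    (hφ' : ∀ t, deriv φ t = (1 - (φ t) ^ 2) ^ ((1 / c₀ : ℝ)))
    (u : EuclideanSpace ℝ (Fin n) → ℝ) (hu : ContDiff ℝ (⊤ : ℕ∞) u)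
    (heq : ∀ x, lap u x = (u x) ^ 3 - u x)
    (hbd : ∀ x, |u x| < 1)
    (w : EuclideanSpace ℝ (Fin n) → ℝ) (hw : ContDiff ℝ (⊤ : ℕ∞) w)
    (hcomp : u = φ ∘ w) :
    (∀ x, lap w x =
        (u x / deriv φ (w x)) *
          ((u x) ^ 2 - 1 + 2 * ‖gradient u x‖ ^ 2 / (c₀ * (1 - (u x) ^ 2)))) ∧
    ∀ x, (c₀ / 2) * (1 - (u x) ^ 2) ^ 2 ≤ ‖gradient u x‖ ^ 2 →
      0 ≤ w x * lap w x := by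
  
  obtain ⟨hc₀pos, hc₀lt⟩ := hc₀
  have hwd : Differentiable ℝ w := hw.differentiable (by simp)
  have hbφ : ∀ t, 0 < 1 - (φ t) ^ 2 := by
    intro t; have h := hφbd t; nlinarith [h.1, h.2]
  have hφ'pos : ∀ t, 0 < deriv φ t := by
    intro t; rw [hφ' t]; exact Real.rpow_pos_of_pos (hbφ t) _
  set φ'' : ℝ → ℝ :=
    fun t => 1 / c₀ * (1 - φ t ^ 2) ^ ((1 / c₀ : ℝ) - 1)
      * (-(2 * φ t * (1 - φ t ^ 2) ^ ((1 / c₀ : ℝ)))) with hφ''def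
  have hφ'' : ∀ t, HasDerivAt (deriv φ) (φ'' t) t := by
    intro t
    have h2 : HasDerivAt (fun s => φ s ^ 2) ((2 : ℕ) * φ t ^ 1 * deriv φ t) t :=
      (hφdiff t).hasDerivAt.pow 2
    have h1 : HasDerivAt (fun s => 1 - φ s ^ 2)
        (-(2 * φ t * (1 - φ t ^ 2) ^ ((1 / c₀ : ℝ)))) t := by
      have h1' := h2.const_sub 1
      rw [hφ' t] at h1'
      simpa using h1'
    have h3 : HasDerivAt (fun y : ℝ => y ^ ((1 / c₀ : ℝ)))
        ((1 / c₀) * (1 - φ t ^ 2) ^ ((1 / c₀ : ℝ) - 1)) (1 - φ t ^ 2) :=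
      Real.hasDerivAt_rpow_const (Or.inl (ne_of_gt (hbφ t)))
    have h4 := h3.comp t h1
    have hfun : deriv φ = fun s => (1 - φ s ^ 2) ^ ((1 / c₀ : ℝ)) := funext fun s => hφ' s
    rw [hφ''def, hfun]
    exact h4
  have hfd_u : ∀ y, HasFDerivAt u (deriv φ (w y) • fderiv ℝ w y) y := by
    intro y
    have := ((hφdiff (w y)).hasDerivAt).comp_hasFDerivAt y (hwd y).hasFDerivAt
    rw [← hcomp] at this
    exact this
  have hfderiv_u_apply : ∀ y v, fderiv ℝ u y v = deriv φ (w y) * fderiv ℝ w y v := by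
    intro y v; rw [(hfd_u y).fderiv]; rfl
  have hwfd : ContDiff ℝ (⊤ : ℕ∞) (fderiv ℝ w) := hw.fderiv_right (by simp)
  have hWj : ∀ j : Fin n,
      Differentiable ℝ (fun y => fderiv ℝ w y (EuclideanSpace.single j 1)) :=
    fun j => (hwfd.differentiable (by simp)).clm_apply (differentiable_const _)
  have key : ∀ x (i j : Fin n), pderiv2 u x i j =
      φ'' (w x) * fderiv ℝ w x (EuclideanSpace.single i 1)
        * fderiv ℝ w x (EuclideanSpace.single j 1)
      + deriv φ (w x) * pderiv2 w x i j := by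
    intro x i j
    have hA : HasFDerivAt (fun y => deriv φ (w y)) ((φ'' (w x)) • fderiv ℝ w x) x :=
      (hφ'' (w x)).comp_hasFDerivAt x (hwd x).hasFDerivAt
    have hB : HasFDerivAt (fun y => fderiv ℝ w y (EuclideanSpace.single j 1))
        (fderiv ℝ (fun y => fderiv ℝ w y (EuclideanSpace.single j 1)) x) x :=
      (hWj j x).hasFDerivAt
    have hAB : HasFDerivAt (fun y => deriv φ (w y) * fderiv ℝ w y (EuclideanSpace.single j 1)) _ x :=
      hA.mul hB
    have heqfun : (fun y => fderiv ℝ u y (EuclideanSpace.single j 1))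
        = fun y => deriv φ (w y) * fderiv ℝ w y (EuclideanSpace.single j 1) :=
      funext fun y => hfderiv_u_apply y _
    show fderiv ℝ (fun y => fderiv ℝ u y (EuclideanSpace.single j 1)) x
        (EuclideanSpace.single i 1) = _
    rw [heqfun, hAB.fderiv]
    simp only [ContinuousLinearMap.add_apply, ContinuousLinearMap.smul_apply, smul_eq_mul]
    show _ = _ + deriv φ (w x) * pderiv2 w x i j
    rw [pderiv2]
    ring
  set S : EuclideanSpace ℝ (Fin n) → ℝ :=
    fun x => ∑ i, (fderiv ℝ w x (EuclideanSpace.single i 1)) ^ 2 with hSdef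
  have hlapu : ∀ x, lap u x = φ'' (w x) * S x + deriv φ (w x) * lap w x := by
    intro x
    rw [lap, lap]
    simp only [key]
    rw [Finset.sum_add_distrib, hSdef, Finset.mul_sum, Finset.mul_sum]
    congr 1
    exact Finset.sum_congr rfl fun i _ => by ring
  have hgu : ∀ x, ‖gradient u x‖ ^ 2 = (deriv φ (w x)) ^ 2 * S x := by
    intro x
    rw [gradient_norm_sq, hSdef, Finset.mul_sum]
    exact Finset.sum_congr rfl fun i _ => by rw [hfderiv_u_apply]; ring
  have hux : ∀ x, u x = φ (w x) := fun x => congrFun hcomp x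
  have h1u : ∀ x, 0 < 1 - (u x) ^ 2 := fun x => by rw [hux]; exact hbφ (w x)
  have hDpos : ∀ x, 0 < deriv φ (w x) := fun x => hφ'pos (w x)
  have hφ''eq : ∀ x, φ'' (w x) =
      -(2 * u x * (deriv φ (w x)) ^ 2) / (c₀ * (1 - (u x) ^ 2)) := by
    intro x
    have hrpow : (1 - φ (w x) ^ 2) ^ ((1 / c₀ : ℝ) - 1)
        = deriv φ (w x) / (1 - φ (w x) ^ 2) := by
      rw [Real.rpow_sub (hbφ (w x)), Real.rpow_one, hφ' (w x)]
    rw [hφ''def]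
    simp only
    rw [hrpow, ← hφ' (w x), hux x]
    have h1 : (1 - φ (w x) ^ 2) ≠ 0 := ne_of_gt (hbφ (w x))
    have h2 : c₀ ≠ 0 := ne_of_gt hc₀pos
    field_simp
  have part1 : ∀ x, lap w x =
      (u x / deriv φ (w x)) *
        ((u x) ^ 2 - 1 + 2 * ‖gradient u x‖ ^ 2 / (c₀ * (1 - (u x) ^ 2))) := by
    intro x
    have hkey : (u x) ^ 3 - u x
        = φ'' (w x) * S x + deriv φ (w x) * lap w x := by rw [← hlapu, heq]
    rw [hφ''eq x] at hkey
    rw [hgu x]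
    have hDne : deriv φ (w x) ≠ 0 := ne_of_gt (hDpos x)
    have h1ne : (1 : ℝ) - (u x) ^ 2 ≠ 0 := ne_of_gt (h1u x)
    have hc₀ne : c₀ ≠ 0 := ne_of_gt hc₀pos
    field_simp at hkey ⊢
    nlinarith [hkey, sq_nonneg (deriv φ (w x))]
  refine ⟨part1, fun x hGx => ?_⟩
  have hE : 0 ≤ (u x) ^ 2 - 1 + 2 * ‖gradient u x‖ ^ 2 / (c₀ * (1 - (u x) ^ 2)) := by
    have hpos : 0 < c₀ * (1 - (u x) ^ 2) := mul_pos hc₀pos (h1u x)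
    rw [← sub_nonneg]
    have : (1 - (u x) ^ 2) ≤ 2 * ‖gradient u x‖ ^ 2 / (c₀ * (1 - (u x) ^ 2)) := by
      rw [le_div_iff₀ hpos]; nlinarith
    linarith
  have hwa : 0 ≤ w x * u x := by
    have hmono : StrictMono φ := strictMono_of_deriv_pos hφ'pos
    rw [hux x]
    rcases le_or_gt 0 (w x) with h | h
    · have : φ 0 ≤ φ (w x) := hmono.monotone h
      rw [hφ0] at this
      exact mul_nonneg h this
    · have : φ (w x) < φ 0 := hmono h
      rw [hφ0] at this
      nlinarith [h.le, this.le]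
  rw [part1 x]
  have hD := (hDpos x).le
  calc (0:ℝ) ≤ (w x * u x) *
        ((u x) ^ 2 - 1 + 2 * ‖gradient u x‖ ^ 2 / (c₀ * (1 - (u x) ^ 2)))
        / deriv φ (w x) := div_nonneg (mul_nonneg hwa hE) hD
    _ = w x * (u x / deriv φ (w x) *
        ((u x) ^ 2 - 1 + 2 * ‖gradient u x‖ ^ 2 / (c₀ * (1 - (u x) ^ 2)))) := by ring
end
end
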